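/- Weighted estimate for the resolvent memory solution: defining χ(s) = (1 − e^{−s}) φ + ∫₀ˢ e^{τ − s} ψ(τ) dτ, one has ∫₀^∞ μ(s) ‖χ(s)‖² ds ≤ 2 μ₀ ‖φ‖² + 2 ∫₀^∞ μ(s) ‖ψ(s)‖² ds, where μ₀ = ∫₀^∞ μ(s) ds. -/

import Mathlib

open MeasureTheory intervalIntegral Set Real

/-- Cauchy–Schwarz with weight `exp (τ - s)` on `[0, s]`: since the weight has total mass
`1 - exp (-s) ≤ 1`, the square of the weighted integral of `h` is bounded by the weighted
integral of `h ^ 2`. -/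
lemma cs_exp_weight (s : ℝ) (hs : 0 < s) (h : ℝ → ℝ) (hh : Continuous h) :
    (∫ τ in (0:ℝ)..s, Real.exp (τ - s) * h τ) ^ 2
      ≤ ∫ τ in (0:ℝ)..s, Real.exp (τ - s) * h τ ^ 2 := by
  set w : ℝ → ℝ := fun τ => Real.exp (τ - s) with hw_def
  have hw : Continuous w := Real.continuous_exp.comp (continuous_id.sub continuous_const)
  set A : ℝ := ∫ τ in (0:ℝ)..s, w τ with hA_def
  set P : ℝ := ∫ τ in (0:ℝ)..s, w τ * h τ with hP_def
  set Q : ℝ := ∫ τ in (0:ℝ)..s, w τ * h τ ^ 2 with hQ_def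
  have hQ_nonneg : 0 ≤ Q :=
    intervalIntegral.integral_nonneg hs.le fun τ _ =>
      mul_nonneg (Real.exp_nonneg _) (sq_nonneg _)
  have hA_le_one : A ≤ 1 := by
    have : A = Real.exp (-s) * (Real.exp s - 1) := by
      have h1 : ∀ τ ∈ Set.uIcc (0:ℝ) s, w τ = Real.exp (-s) * Real.exp τ := by
        intro τ _
        rw [hw_def, ← Real.exp_add]
        ring_nf
      rw [hA_def, intervalIntegral.integral_congr h1, intervalIntegral.integral_const_mul,
        integral_exp, Real.exp_zero]
    have h1 : Real.exp (-s) * Real.exp s = 1 := by rw [← Real.exp_add]; simp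
    rw [this]
    nlinarith [h1, Real.exp_nonneg (-s)]
  have key : ∀ t : ℝ, 0 ≤ A * (t * t) + (-2 * P) * t + Q := by
    intro t
    have h0 : 0 ≤ ∫ τ in (0:ℝ)..s, w τ * (h τ - t) ^ 2 :=
      intervalIntegral.integral_nonneg hs.le fun τ _ =>
        mul_nonneg (Real.exp_nonneg _) (sq_nonneg _)
    have hexp : (∫ τ in (0:ℝ)..s, w τ * (h τ - t) ^ 2)
        = Q + (-2 * t) * P + (t * t) * A := by
      have h1 : ∀ τ ∈ Set.uIcc (0:ℝ) s,
          w τ * (h τ - t) ^ 2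
            = (w τ * h τ ^ 2 + (-2 * t) * (w τ * h τ)) + (t * t) * w τ := by
        intro τ _; ring
      rw [intervalIntegral.integral_congr h1]
      have i1 : IntervalIntegrable (fun τ => w τ * h τ ^ 2) volume 0 s :=
        (hw.mul (hh.pow 2)).intervalIntegrable 0 s
      have i2 : IntervalIntegrable (fun τ => (-2 * t) * (w τ * h τ)) volume 0 s :=
        (continuous_const.mul (hw.mul hh)).intervalIntegrable 0 s
      have i3 : IntervalIntegrable (fun τ => (t * t) * w τ) volume 0 s :=
        (continuous_const.mul hw).intervalIntegrable 0 s
      rw [intervalIntegral.integral_add (i1.add i2) i3, intervalIntegral.integral_add i1 i2,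
        intervalIntegral.integral_const_mul, intervalIntegral.integral_const_mul]
    rw [hexp] at h0
    linarith
  have hdisc := discrim_le_zero key
  rw [discrim] at hdisc
  have hPA : P ^ 2 ≤ A * Q := by nlinarith
  have : A * Q ≤ Q := by nlinarith
  linarith

/-- weighted estimate for the resolvent memory solution, used in the
surjectivity part of the proof of Theorem 3.1. Let `H` be a real Hilbert space, `μ`
nonnegative, nonincreasing and integrable on `[0,∞)`, `φ ∈ H` and `ψ : [0,∞) → H`
continuous with `∫₀^∞ μ(s) ‖ψ(s)‖² ds < ∞`. Then
`χ(s) = (1 − e^{−s}) φ + ∫₀ˢ e^{τ−s} ψ(τ) dτ` satisfies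
`∫₀^∞ μ(s) ‖χ(s)‖² ds ≤ 2 μ₀ ‖φ‖² + 2 ∫₀^∞ μ(s) ‖ψ(s)‖² ds`, with `μ₀ = ∫₀^∞ μ(s) ds`. -/
theorem resolvent_memory_weighted_estimate
    {H : Type*} [NormedAddCommGroup H] [InnerProductSpace ℝ H] [CompleteSpace H]
    (μ : ℝ → ℝ)
    (hμ_nonneg : ∀ s ∈ Set.Ici (0:ℝ), 0 ≤ μ s)
    (hμ_anti : AntitoneOn μ (Set.Ici 0))
    (hμ_int : IntegrableOn μ (Set.Ioi 0))
    (φ : H) (ψ : ℝ → H) (hψ : Continuous ψ)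
    (hψ_int : IntegrableOn (fun s => μ s * ‖ψ s‖ ^ 2) (Set.Ioi 0))
    (χ : ℝ → H)
    (hχ : ∀ s, χ s = (1 - Real.exp (-s)) • φ + ∫ τ in (0:ℝ)..s, Real.exp (τ - s) • ψ τ) :
    (∫ s in Set.Ioi (0:ℝ), μ s * ‖χ s‖ ^ 2)
      ≤ 2 * (∫ s in Set.Ioi (0:ℝ), μ s) * ‖φ‖ ^ 2
        + 2 * ∫ s in Set.Ioi (0:ℝ), μ s * ‖ψ s‖ ^ 2 := by
  classical
  -- A measurable modification of `μ`, agreeing with `μ` on `[0, ∞)`.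
  set m : ℝ → ℝ := fun s => μ (max s 0) with hm_def
  have hm_anti : Antitone m := by
    intro a b hab
    exact hμ_anti (le_max_right a 0) (le_max_right b 0) (max_le_max hab le_rfl)
  have hm_meas : Measurable m := hm_anti.measurable
  have hm_nonneg : ∀ s, 0 ≤ m s := fun s => hμ_nonneg _ (le_max_right s 0)
  have hmeq : Set.EqOn μ m (Set.Ioi 0) := by
    intro s hs
    simp only [hm_def, max_eq_left (le_of_lt (Set.mem_Ioi.mp hs))]
  have hm_int : IntegrableOn m (Set.Ioi 0) := hμ_int.congr_fun hmeq measurableSet_Ioi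
  have hψ2 : Continuous fun τ => ‖ψ τ‖ ^ 2 := (hψ.norm.pow 2)
  set k : ℝ → ℝ := fun τ => ‖ψ τ‖ ^ 2 * m τ with hk_def
  have hk_meas : Measurable k := hψ2.measurable.mul hm_meas
  have hk_nonneg : ∀ τ, 0 ≤ k τ := fun τ => mul_nonneg (sq_nonneg _) (hm_nonneg τ)
  have hk_int : IntegrableOn k (Set.Ioi 0) := by
    refine hψ_int.congr_fun (fun s hs => ?_) measurableSet_Ioi
    simp only [hk_def, hmeq hs, mul_comm]
  -- `m` is integrable on every compact interval.
  have hm_icc : ∀ a b : ℝ, IntegrableOn m (Set.Icc a b) := by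
    intro a b
    have h1 : IntegrableOn m (Set.Icc a b ∩ Set.Iic 0) := by
      have heq : Set.EqOn (fun _ => μ 0) m (Set.Icc a b ∩ Set.Iic 0) := by
        intro τ hτ
        simp only [hm_def]
        rw [max_eq_right (Set.mem_Iic.mp hτ.2)]
      refine (IntegrableOn.congr_fun ?_ heq (measurableSet_Icc.inter measurableSet_Iic))
      exact integrableOn_const (((measure_mono
        Set.inter_subset_left).trans_lt measure_Icc_lt_top).ne)
    have h2 : IntegrableOn m (Set.Icc a b ∩ Set.Ioi 0) :=
      hm_int.mono_set Set.inter_subset_right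
    refine (h1.union h2).mono_set ?_
    intro τ hτ
    rcases le_or_gt τ 0 with hτ0 | hτ0
    · exact Or.inl ⟨hτ, hτ0⟩
    · exact Or.inr ⟨hτ, hτ0⟩
  set q : ℝ → ℝ := fun τ => (Real.exp τ * ‖ψ τ‖ ^ 2) * m τ with hq_def
  have hq_meas : Measurable q := (Real.measurable_exp.mul hψ2.measurable).mul hm_meas
  have hq_nonneg : ∀ τ, 0 ≤ q τ := fun τ =>
    mul_nonneg (mul_nonneg (Real.exp_nonneg _) (sq_nonneg _)) (hm_nonneg τ)
  have hq_icc : ∀ a b : ℝ, IntegrableOn q (Set.Icc a b) := fun a b =>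
    IntegrableOn.continuousOn_mul ((Real.continuous_exp.mul hψ2).continuousOn)
      (hm_icc a b) isCompact_Icc
  have hq_ii : ∀ a b : ℝ, IntervalIntegrable q volume a b := by
    intro a b
    rw [intervalIntegrable_iff']
    exact (hq_icc (min a b) (max a b)).mono_set (by rw [Set.uIcc])
  set W : ℝ → ℝ := fun s => ∫ τ in (0:ℝ)..s, q τ with hW_def
  have hW_cont : Continuous W := intervalIntegral.continuous_primitive hq_ii 0
  set Jf : ℝ → ℝ := fun s => Real.exp (-s) * W s with hJ_def
  have hJ_cont : Continuous Jf := (Real.continuous_exp.comp continuous_neg).mul hW_cont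
  have hJ_nonneg : ∀ s ∈ Set.Ioi (0:ℝ), 0 ≤ Jf s := by
    intro s hs
    exact mul_nonneg (Real.exp_nonneg _)
      (intervalIntegral.integral_nonneg (le_of_lt hs) fun τ _ => hq_nonneg τ)
  -- Pointwise bound on `(0, ∞)`.
  have key : ∀ s ∈ Set.Ioi (0:ℝ),
      m s * ‖χ s‖ ^ 2 ≤ 2 * (m s * ‖φ‖ ^ 2) + 2 * Jf s := by
    intro s hs
    rw [Set.mem_Ioi] at hs
    set I : H := ∫ τ in (0:ℝ)..s, Real.exp (τ - s) • ψ τ with hI_def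
    have hnI : ‖I‖ ≤ ∫ τ in (0:ℝ)..s, Real.exp (τ - s) * ‖ψ τ‖ := by
      refine (intervalIntegral.norm_integral_le_integral_norm hs.le).trans_eq ?_
      refine intervalIntegral.integral_congr fun τ _ => ?_
      rw [norm_smul, Real.norm_eq_abs, abs_of_nonneg (Real.exp_nonneg _)]
    have hnI_nonneg : 0 ≤ ∫ τ in (0:ℝ)..s, Real.exp (τ - s) * ‖ψ τ‖ :=
      intervalIntegral.integral_nonneg hs.le fun τ _ =>
        mul_nonneg (Real.exp_nonneg _) (norm_nonneg _)
    have hCS := cs_exp_weight s hs (fun τ => ‖ψ τ‖) hψ.norm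
    have hI2 : ‖I‖ ^ 2 ≤ ∫ τ in (0:ℝ)..s, Real.exp (τ - s) * ‖ψ τ‖ ^ 2 := by
      calc ‖I‖ ^ 2 ≤ (∫ τ in (0:ℝ)..s, Real.exp (τ - s) * ‖ψ τ‖) ^ 2 :=
            pow_le_pow_left₀ (norm_nonneg _) hnI 2
        _ ≤ _ := hCS
    have hms : m s * (∫ τ in (0:ℝ)..s, Real.exp (τ - s) * ‖ψ τ‖ ^ 2) ≤ Jf s := by
      have h1 : ∀ τ ∈ Set.uIcc (0:ℝ) s,
          Real.exp (τ - s) * ‖ψ τ‖ ^ 2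
            = Real.exp (-s) * (Real.exp τ * ‖ψ τ‖ ^ 2) := by
        intro τ _
        rw [← mul_assoc, ← Real.exp_add]
        ring_nf
      rw [intervalIntegral.integral_congr h1, intervalIntegral.integral_const_mul]
      have h2 : m s * (∫ τ in (0:ℝ)..s, Real.exp τ * ‖ψ τ‖ ^ 2) ≤ W s := by
        have h3 : (∫ τ in (0:ℝ)..s, (Real.exp τ * ‖ψ τ‖ ^ 2) * m s)
            = (∫ τ in (0:ℝ)..s, Real.exp τ * ‖ψ τ‖ ^ 2) * m s :=
          intervalIntegral.integral_mul_const _ _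
        rw [mul_comm, ← h3]
        refine intervalIntegral.integral_mono_on hs.le
          (((Real.continuous_exp.mul hψ2).mul continuous_const).intervalIntegrable 0 s)
          (hq_ii 0 s) fun τ hτ => ?_
        exact mul_le_mul_of_nonneg_left (hm_anti hτ.2)
          (mul_nonneg (Real.exp_nonneg _) (sq_nonneg _))
      calc m s * (Real.exp (-s) * ∫ τ in (0:ℝ)..s, Real.exp τ * ‖ψ τ‖ ^ 2)
          = Real.exp (-s) * (m s * ∫ τ in (0:ℝ)..s, Real.exp τ * ‖ψ τ‖ ^ 2) := by ring
        _ ≤ Real.exp (-s) * W s := mul_le_mul_of_nonneg_left h2 (Real.exp_nonneg _)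
    have hφ1 : ‖(1 - Real.exp (-s)) • φ‖ ≤ ‖φ‖ := by
      rw [norm_smul, Real.norm_eq_abs]
      have h1 : Real.exp (-s) ≤ 1 := Real.exp_le_one_iff.mpr (by linarith)
      have h2 : 0 < Real.exp (-s) := Real.exp_pos _
      rw [abs_of_nonneg (by linarith)]
      nlinarith [norm_nonneg φ]
    have hχs : ‖χ s‖ ^ 2 ≤ 2 * ‖φ‖ ^ 2 + 2 * ‖I‖ ^ 2 := by
      rw [hχ s]
      have h1 : ‖(1 - Real.exp (-s)) • φ + I‖ ≤ ‖φ‖ + ‖I‖ :=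
        (norm_add_le _ _).trans (add_le_add_left hφ1 _)
      have h2 : ‖(1 - Real.exp (-s)) • φ + I‖ ^ 2 ≤ (‖φ‖ + ‖I‖) ^ 2 :=
        pow_le_pow_left₀ (norm_nonneg _) h1 2
      nlinarith [sq_nonneg (‖φ‖ - ‖I‖)]
    nlinarith [mul_le_mul_of_nonneg_left hχs (hm_nonneg s),
      mul_le_mul_of_nonneg_left hI2 (hm_nonneg s), hms, hm_nonneg s]
  -- Tonelli computation: `∫⁻ ofReal (Jf) = ∫⁻ ofReal k` over `(0, ∞)`.
  have hTon : (∫⁻ s in Set.Ioi (0:ℝ), ENNReal.ofReal (Jf s))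
      = ∫⁻ τ in Set.Ioi (0:ℝ), ENNReal.ofReal (k τ) := by
    set f2 : ℝ → ℝ → ENNReal := fun s τ =>
      Set.indicator (Set.Ioc 0 s) (fun τ' => ENNReal.ofReal (Real.exp (-s) * q τ')) τ
      with hf2_def
    have step1 : (∫⁻ s in Set.Ioi (0:ℝ), ENNReal.ofReal (Jf s))
        = ∫⁻ s in Set.Ioi (0:ℝ), ∫⁻ τ in Set.Ioi (0:ℝ), f2 s τ := by
      refine setLIntegral_congr_fun measurableSet_Ioi ?_
      intro s hs
      rw [Set.mem_Ioi] at hs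
      have e1 : Jf s = ∫ τ in Set.Ioc 0 s, Real.exp (-s) * q τ := by
        rw [hJ_def]
        simp only
        rw [hW_def]
        simp only
        rw [← intervalIntegral.integral_const_mul, intervalIntegral.integral_of_le hs.le]
      have hint : IntegrableOn (fun τ => Real.exp (-s) * q τ) (Set.Ioc 0 s) :=
        ((hq_icc 0 s).mono_set Set.Ioc_subset_Icc_self).const_mul _
      have e2 : ENNReal.ofReal (Jf s)
          = ∫⁻ τ in Set.Ioc 0 s, ENNReal.ofReal (Real.exp (-s) * q τ) := by
        rw [e1]
        exact ofReal_integral_eq_lintegral_ofReal hint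
          (Filter.Eventually.of_forall fun τ =>
            mul_nonneg (Real.exp_nonneg _) (hq_nonneg τ))
      dsimp only
      rw [e2, hf2_def]
      rw [lintegral_indicator measurableSet_Ioc, Measure.restrict_restrict measurableSet_Ioc,
        Set.inter_eq_left.mpr fun τ hτ => hτ.1]
    have hmeas_f2 : Measurable (Function.uncurry f2) := by
      have hset : MeasurableSet {p : ℝ × ℝ | 0 < p.2 ∧ p.2 ≤ p.1} :=
        (measurableSet_lt measurable_const measurable_snd).inter
          (measurableSet_le measurable_snd measurable_fst)
      have hfun : Measurable fun p : ℝ × ℝ => ENNReal.ofReal (Real.exp (-p.1) * q p.2) :=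
        ENNReal.measurable_ofReal.comp
          ((Real.measurable_exp.comp measurable_fst.neg).mul (hq_meas.comp measurable_snd))
      have : Function.uncurry f2 = fun p : ℝ × ℝ =>
          if 0 < p.2 ∧ p.2 ≤ p.1 then ENNReal.ofReal (Real.exp (-p.1) * q p.2) else 0 := by
        funext p
        simp only [Function.uncurry, hf2_def, Set.indicator_apply, Set.mem_Ioc]
      rw [this]
      exact Measurable.ite hset hfun measurable_const
    have step2 : (∫⁻ s in Set.Ioi (0:ℝ), ∫⁻ τ in Set.Ioi (0:ℝ), f2 s τ)
        = ∫⁻ τ in Set.Ioi (0:ℝ), ∫⁻ s in Set.Ioi (0:ℝ), f2 s τ :=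
      lintegral_lintegral_swap hmeas_f2.aemeasurable
    have step3 : (∫⁻ τ in Set.Ioi (0:ℝ), ∫⁻ s in Set.Ioi (0:ℝ), f2 s τ)
        = ∫⁻ τ in Set.Ioi (0:ℝ), ENNReal.ofReal (k τ) := by
      refine setLIntegral_congr_fun measurableSet_Ioi ?_
      intro τ hτ
      rw [Set.mem_Ioi] at hτ
      have e1 : ∀ s, f2 s τ
          = Set.indicator (Set.Ici τ) (fun s' => ENNReal.ofReal (Real.exp (-s') * q τ)) s := by
        intro s
        simp only [hf2_def, Set.indicator_apply, Set.mem_Ioc, Set.mem_Ici]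
        congr 1
        simp [hτ]
      simp only [e1]
      have hIci : Set.Ici τ ∩ Set.Ioi 0 = Set.Ici τ :=
        Set.inter_eq_left.mpr fun s hsτ => lt_of_lt_of_le hτ (Set.mem_Ici.mp hsτ)
      rw [lintegral_indicator measurableSet_Ici, Measure.restrict_restrict measurableSet_Ici,
        hIci, ← Measure.restrict_congr_set Ioi_ae_eq_Ici]
      have e2 : ∀ s : ℝ, ENNReal.ofReal (Real.exp (-s) * q τ)
          = ENNReal.ofReal (Real.exp (τ - s)) * ENNReal.ofReal (k τ) := by
        intro s
        rw [← ENNReal.ofReal_mul (Real.exp_nonneg _)]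
        congr 1
        simp only [hq_def, hk_def]
        rw [Real.exp_sub, Real.exp_neg]
        ring
      simp only [e2]
      have hm1 : Measurable fun s : ℝ => ENNReal.ofReal (Real.exp (τ - s)) :=
        (Real.measurable_exp.comp (measurable_const.sub measurable_id)).ennreal_ofReal
      rw [lintegral_mul_const _ hm1]
      have e3 : (∫⁻ s in Set.Ioi τ, ENNReal.ofReal (Real.exp (τ - s))) = 1 := by
        have hint : IntegrableOn (fun s => Real.exp (τ - s)) (Set.Ioi τ) := by
          have h0 : IntegrableOn (fun s => Real.exp (-s)) (Set.Ioi τ) := by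
            have := exp_neg_integrableOn_Ioi τ (b := 1) one_pos
            simpa using this
          refine IntegrableOn.congr_fun (h0.const_mul (Real.exp τ))
            (fun s _ => ?_) measurableSet_Ioi
          rw [← Real.exp_add, sub_eq_add_neg]
        rw [← ofReal_integral_eq_lintegral_ofReal hint
          (Filter.Eventually.of_forall fun s => Real.exp_nonneg _)]
        have : (∫ s in Set.Ioi τ, Real.exp (τ - s)) = 1 := by
          have hc : ∀ s : ℝ, Real.exp (τ - s) = Real.exp τ * Real.exp (-s) := by
            intro s; rw [← Real.exp_add]; ring_nf
          rw [show (fun s => Real.exp (τ - s)) = fun s => Real.exp τ * Real.exp (-s) from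
            funext hc]
          rw [MeasureTheory.integral_const_mul, integral_exp_neg_Ioi, ← Real.exp_add]
          simp
        rw [this, ENNReal.ofReal_one]
      rw [e3, one_mul]
    rw [step1, step2, step3]
  have hL_fin : (∫⁻ τ in Set.Ioi (0:ℝ), ENNReal.ofReal (k τ)) ≠ ⊤ := by
    rw [← ofReal_integral_eq_lintegral_ofReal hk_int
      (Filter.Eventually.of_forall fun τ => hk_nonneg τ)]
    exact ENNReal.ofReal_ne_top
  have hJ_int : IntegrableOn Jf (Set.Ioi 0) := by
    refine ⟨hJ_cont.aestronglyMeasurable.restrict, ?_⟩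
    rw [hasFiniteIntegral_iff_norm]
    have : (∫⁻ s in Set.Ioi (0:ℝ), ENNReal.ofReal ‖Jf s‖)
        = ∫⁻ s in Set.Ioi (0:ℝ), ENNReal.ofReal (Jf s) := by
      refine setLIntegral_congr_fun measurableSet_Ioi ?_
      intro s hs
      dsimp only
      rw [Real.norm_of_nonneg (hJ_nonneg s hs)]
    rw [this, hTon]
    exact lt_top_iff_ne_top.mpr hL_fin
  have hJ_val : (∫ s in Set.Ioi (0:ℝ), Jf s) = ∫ τ in Set.Ioi (0:ℝ), k τ := by
    rw [integral_eq_lintegral_of_nonneg_ae ((ae_restrict_iff' measurableSet_Ioi).mpr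
        (Filter.Eventually.of_forall hJ_nonneg)) hJ_cont.aestronglyMeasurable.restrict,
      integral_eq_lintegral_of_nonneg_ae (Filter.Eventually.of_forall hk_nonneg)
        hk_meas.aestronglyMeasurable.restrict, hTon]
  -- Rewrite the goal in terms of `m`.
  rw [setIntegral_congr_fun measurableSet_Ioi
      (show Set.EqOn (fun s => μ s * ‖χ s‖ ^ 2) (fun s => m s * ‖χ s‖ ^ 2) (Set.Ioi 0)
        from fun s hs => by simp only [hmeq hs]),
    setIntegral_congr_fun measurableSet_Ioi hmeq,
    setIntegral_congr_fun measurableSet_Ioi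
      (show Set.EqOn (fun s => μ s * ‖ψ s‖ ^ 2) k (Set.Ioi 0)
        from fun s hs => by simp only [hk_def, hmeq hs, mul_comm])]
  have hbound_int : Integrable (fun s => 2 * (m s * ‖φ‖ ^ 2) + 2 * Jf s)
      (volume.restrict (Set.Ioi 0)) :=
    (((hm_int.mul_const _).const_mul 2).add (hJ_int.const_mul 2))
  have step : (∫ s in Set.Ioi (0:ℝ), m s * ‖χ s‖ ^ 2)
      ≤ ∫ s in Set.Ioi (0:ℝ), (2 * (m s * ‖φ‖ ^ 2) + 2 * Jf s) := by
    refine integral_mono_of_nonneg ?_ hbound_int ?_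
    · refine (ae_restrict_iff' measurableSet_Ioi).mpr (Filter.Eventually.of_forall ?_)
      intro s _
      exact mul_nonneg (hm_nonneg s) (sq_nonneg _)
    · exact (ae_restrict_iff' measurableSet_Ioi).mpr (Filter.Eventually.of_forall key)
  have split : (∫ s in Set.Ioi (0:ℝ), (2 * (m s * ‖φ‖ ^ 2) + 2 * Jf s))
      = 2 * (∫ s in Set.Ioi (0:ℝ), m s) * ‖φ‖ ^ 2 + 2 * ∫ s in Set.Ioi (0:ℝ), Jf s := by
    rw [integral_add ((hm_int.mul_const _).const_mul 2) (hJ_int.const_mul 2),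
      MeasureTheory.integral_const_mul, MeasureTheory.integral_const_mul,
      MeasureTheory.integral_mul_const]
    ring
  calc (∫ s in Set.Ioi (0:ℝ), m s * ‖χ s‖ ^ 2)
      ≤ ∫ s in Set.Ioi (0:ℝ), (2 * (m s * ‖φ‖ ^ 2) + 2 * Jf s) := step
    _ = 2 * (∫ s in Set.Ioi (0:ℝ), m s) * ‖φ‖ ^ 2 + 2 * ∫ s in Set.Ioi (0:ℝ), Jf s := split
    _ = 2 * (∫ s in Set.Ioi (0:ℝ), m s) * ‖φ‖ ^ 2 + 2 * ∫ τ in Set.Ioi (0:ℝ), k τ := by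
        rw [hJ_val]
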